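/- Let (u_n)_{n≥1} be a non-increasing sequence of real numbers such that there exist ε ∈ (0,1) and β ≥ 0 with u_n ≥ u_{⌊n^{1-ε}⌋} − β/n^ε for all n ≥ 2. Then there exists a constant c_ε > 0 such that for every n ≥ 2 and every integer n_f with 2 ≤ n_f ≤ n, u_n ≥ u_{n_f} − c_ε β/n_f^ε. In particular (u_n)_{n≥1} is bounded below. -/

import Mathlib

/-!
Put `w n = β / n ^ ε` and `m = ⌊n ^ (1 - ε)⌋₊`, so that `u n ≥ u m - w n`. Since
`m ^ ε ≤ n ^ ε / n ^ (ε²) ≤ n ^ ε / 2 ^ (ε²)`, the weights grow by the factor `t = 2 ^ (ε²) > 1`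
from `n` down to `m`; hence with `c = t / (t - 1) = ∑ₖ t⁻ᵏ` the losses along the chain `n, m, …` are
absorbed by the potential `(c - 1) w`, which telescopes: strong induction on `n` gives
`u n ≥ u nf - c w nf + (c - 1) w n`, the chain being stopped at its first index below `nf`, where
monotonicity takes over.
-/

open Real Set

theorem sub_add_le_of_descent (u w : ℕ → ℝ) (p : ℕ → ℕ) {c : ℝ} (hc : 0 ≤ c)
    (hu : AntitoneOn u (Ici 1)) (hw : AntitoneOn w (Ici 2)) (hw0 : ∀ n, 2 ≤ n → 0 ≤ w n)
    (hp : ∀ n, 2 ≤ n → 1 ≤ p n ∧ p n < n) (hstep : ∀ n, 2 ≤ n → u (p n) - w n ≤ u n)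
    (hdrift : ∀ n, 2 ≤ n → c * w n ≤ (c - 1) * w (p n)) :
    ∀ n nf, 2 ≤ nf → nf ≤ n → u nf - c * w nf + (c - 1) * w n ≤ u n := by
  intro n
  induction n using Nat.strong_induction_on with
  | _ n ih =>
    intro nf hnf hle
    rcases hle.eq_or_lt with rfl | hlt
    · linarith [hw0 nf hnf]
    have hn : 2 ≤ n := hnf.trans hlt.le
    obtain ⟨hp1, hpn⟩ := hp n hn
    have hwn : c * w n ≤ c * w nf := mul_le_mul_of_nonneg_left (hw hnf hn hlt.le) hc
    rcases lt_or_ge (p n) nf with hpnf | hpnf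
    · linarith [hstep n hn, hu (mem_Ici.2 hp1) (mem_Ici.2 (hp1.trans hpnf.le)) hpnf.le]
    · linarith [hstep n hn, ih (p n) hpn nf hnf hpnf, hdrift n hn]

section

variable {ε : ℝ}

theorem one_le_floor_rpow_one_sub {x : ℝ} (hx : 1 ≤ x) (hε : ε ≤ 1) : 1 ≤ ⌊x ^ (1 - ε)⌋₊ :=
  (Nat.one_le_floor_iff _).2 (one_le_rpow hx (by linarith))

theorem floor_rpow_one_sub_lt {n : ℕ} (hn : 2 ≤ n) (hε : 0 < ε) : ⌊(n : ℝ) ^ (1 - ε)⌋₊ < n :=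
  (Nat.floor_lt (by positivity)).2 <|
    rpow_lt_self_of_one_lt (by exact_mod_cast hn) (by linarith)

theorem two_rpow_mul_rpow_le {x y : ℝ} (hx : 2 ≤ x) (hy : 0 ≤ y) (hyx : y ≤ x ^ (1 - ε))
    (hε : 0 ≤ ε) : 2 ^ (ε * ε) * y ^ ε ≤ x ^ ε :=
  calc 2 ^ (ε * ε) * y ^ ε ≤ x ^ (ε * ε) * (x ^ (1 - ε)) ^ ε := by gcongr
    _ = x ^ ε := by
      rw [← rpow_mul (by linarith), ← rpow_add (by linarith)]
      ring_nf

noncomputable def descentConst (ε : ℝ) : ℝ := 2 ^ (ε * ε) / (2 ^ (ε * ε) - 1)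

theorem one_lt_two_rpow_mul_self (hε : 0 < ε) : (1 : ℝ) < 2 ^ (ε * ε) :=
  one_lt_rpow one_lt_two (by positivity)

theorem one_le_descentConst (hε : 0 < ε) : 1 ≤ descentConst ε := by
  have := one_lt_two_rpow_mul_self hε
  rw [descentConst, le_div_iff₀ (by linarith)]
  linarith

theorem descentConst_mul_div_rpow_le {β x y : ℝ} (hε : 0 < ε) (hβ : 0 ≤ β) (hx : 2 ≤ x)
    (hy : 0 < y) (hyx : y ≤ x ^ (1 - ε)) :
    descentConst ε * (β / x ^ ε) ≤ (descentConst ε - 1) * (β / y ^ ε) := by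
  have ht := one_lt_two_rpow_mul_self hε
  have hgrowth := two_rpow_mul_rpow_le hx hy.le hyx hε.le
  unfold descentConst
  generalize (2 : ℝ) ^ (ε * ε) = t at *
  calc t / (t - 1) * (β / x ^ ε) = β / (t - 1) * (t / x ^ ε) := by ring
    _ ≤ β / (t - 1) * (1 / y ^ ε) := by
        have : 0 ≤ β / (t - 1) := div_nonneg hβ (by linarith)
        gcongr β / (t - 1) * ?_
        rw [div_le_div_iff₀ (by positivity) (by positivity)]
        linarith
    _ = (t / (t - 1) - 1) * (β / y ^ ε) := by
        field_simp [(by linarith : t - 1 ≠ 0)]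
        ring

end

/-- Convergence of recursively bounded non-increasing sequences. -/
theorem stmt_1 (u : ℕ → ℝ) (hmono : ∀ m n : ℕ, 1 ≤ m → m ≤ n → u n ≤ u m)
    (ε β : ℝ) (hε : ε ∈ Set.Ioo (0 : ℝ) 1) (hβ : 0 ≤ β)
    (hrec : ∀ n : ℕ, 2 ≤ n → u ⌊(n : ℝ) ^ (1 - ε)⌋₊ - β / (n : ℝ) ^ ε ≤ u n) :
    (∃ c > (0 : ℝ), ∀ n : ℕ, 2 ≤ n → ∀ nf : ℕ, 2 ≤ nf → nf ≤ n →
      u nf - c * β / (nf : ℝ) ^ ε ≤ u n) ∧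
    ∃ C : ℝ, ∀ n : ℕ, 1 ≤ n → C ≤ u n := by
  obtain ⟨hε0, hε1⟩ := hε
  set c := descentConst ε
  have hc : 1 ≤ c := one_le_descentConst hε0
  set w : ℕ → ℝ := fun n ↦ β / (n : ℝ) ^ ε
  have hw0 (n : ℕ) : 0 ≤ w n := by positivity
  have hw : AntitoneOn w (Ici 2) := fun m hm n _ hmn ↦ by
    have hm : (0 : ℝ) < m := by simp only [mem_Ici] at hm; positivity
    exact div_le_div_of_nonneg_left hβ (by positivity) (by gcongr)
  have hp (n : ℕ) (hn : 2 ≤ n) : 1 ≤ ⌊(n : ℝ) ^ (1 - ε)⌋₊ ∧ ⌊(n : ℝ) ^ (1 - ε)⌋₊ < n :=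
    ⟨one_le_floor_rpow_one_sub (by exact_mod_cast one_le_two.trans hn) hε1.le,
      floor_rpow_one_sub_lt hn hε0⟩
  have key := sub_add_le_of_descent u w (fun n ↦ ⌊(n : ℝ) ^ (1 - ε)⌋₊) (zero_le_one.trans hc)
    (fun m hm n _ hmn ↦ hmono m n hm hmn) hw (fun n _ ↦ hw0 n) hp hrec
    fun n hn ↦ descentConst_mul_div_rpow_le hε0 hβ (by exact_mod_cast hn)
      (by exact_mod_cast (hp n hn).1) (Nat.floor_le (by positivity))
  have hlower (n : ℕ) (hn : 2 ≤ n) (nf : ℕ) (hnf : 2 ≤ nf) (hle : nf ≤ n) :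
      u nf - c * β / (nf : ℝ) ^ ε ≤ u n := by
    rw [mul_div_assoc]
    linarith [key n nf hnf hle, mul_nonneg (sub_nonneg.2 hc) (hw0 n)]
  refine ⟨⟨c, by linarith, hlower⟩, u 2 - c * β / (2 : ℕ) ^ ε, fun n hn ↦ ?_⟩
  rcases hn.eq_or_lt with rfl | hn
  · linarith [hmono 1 2 le_rfl one_le_two, hlower 2 le_rfl 2 le_rfl le_rfl]
  · exact hlower n hn 2 le_rfl hn
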